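/- Consider the weight lattice of G2 in fundamental-weight coordinates, with Cartan matrix A = [[2,-3],[-1,2]] (so the simple reflection s_i acts on coordinates by μ ↦ μ - μ_i·(i-th column of A applied appropriately, i.e. s_i(μ) = μ - ⟨μ,β_i^∨⟩β_i). For a real parameter x ≥ 0, let λ(x) = (1/2 - 3x, 2x). Then the unique dominant element in the W(G2)-orbit of λ(x) has some coordinate strictly greater than 1 if and only if x > 3/2. -/

import Mathlib

/-!
Write λ(x) = ω₁/2 + x β₂: here ω₁ = (1,0) is a short root and β₂ = (-3,2) a long root orthogonal
to it for the W-invariant form. The simple reflections preserve that form and the integer lattice,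
so every point of the orbit is u/2 + x v with u a short root and v a long root orthogonal to u.
There are twelve such pairs. For x ≥ 0 the dominant points among them are (1/2 - 3x, 2x) for
x ≤ 1/6, (3x - 1/2, 1/2 - x) for 1/6 ≤ x ≤ 1/2 and (1, x - 1/2) for x ≥ 1/2; only the last can
have a coordinate above 1, and it does exactly when x > 3/2.
-/

theorem Relation.EqvGen.iff_of_forall {α : Type*} {r : α → α → Prop} {P : α → Prop}
    (h : ∀ a b, r a b → (P a ↔ P b)) {a b : α} (hab : Relation.EqvGen r a b) : P a ↔ P b :=
  (Equivalence.eqvGen_iff (r := fun a b => P a ↔ P b) ⟨fun _ => Iff.rfl, Iff.symm, Iff.trans⟩).mp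
    (hab.mono h)

namespace G2

variable {R : Type*} [CommRing R]

def reflect (i : Fin 2) (μ : Fin 2 → R) : Fin 2 → R :=
  fun j => μ j - μ i * ![![2, -1], ![-3, 2]] i j

/-- The W-invariant form, normalised so that short roots have square length 2 and long roots 6. -/
def weylForm (μ ν : Fin 2 → R) : R :=
  2 * μ 0 * ν 0 + 3 * (μ 0 * ν 1 + μ 1 * ν 0) + 6 * μ 1 * ν 1

lemma reflect_reflect (i : Fin 2) (μ : Fin 2 → R) : reflect i (reflect i μ) = μ := by
  ext j; fin_cases i <;> fin_cases j <;> simp [reflect] <;> ring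

lemma reflect_add_smul (i : Fin 2) (c d : R) (μ ν : Fin 2 → R) :
    reflect i (c • μ + d • ν) = c • reflect i μ + d • reflect i ν := by
  ext j; simp only [reflect, Pi.add_apply, Pi.smul_apply, smul_eq_mul]; ring

lemma weylForm_reflect (i : Fin 2) (μ ν : Fin 2 → R) :
    weylForm (reflect i μ) (reflect i ν) = weylForm μ ν := by
  fin_cases i <;> simp [weylForm, reflect] <;> ring

lemma map_comp_reflect {S : Type*} [CommRing S] (f : R →+* S) (i : Fin 2) (μ : Fin 2 → R) :
    f ∘ reflect i μ = reflect i (f ∘ μ) := by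
  ext j; fin_cases i <;> fin_cases j <;> simp [reflect, map_ofNat]

lemma eq_of_weylForm_self_eq_two {u : Fin 2 → ℤ} (hu : weylForm u u = 2) :
    u = ![1, 0] ∨ u = ![-1, 0] ∨ u = ![-1, 1] ∨ u = ![1, -1] ∨ u = ![2, -1] ∨ u = ![-2, 1] := by
  simp only [weylForm] at hu
  obtain ⟨hb1, hb2⟩ : -1 ≤ u 1 ∧ u 1 ≤ 1 := by
    constructor <;> nlinarith [sq_nonneg (2 * u 0 + 3 * u 1)]
  obtain ⟨ha1, ha2⟩ : -2 ≤ u 0 ∧ u 0 ≤ 2 := by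
    constructor <;> nlinarith [sq_nonneg (3 * u 0 + 6 * u 1)]
  rw [show u = ![u 0, u 1] by ext j; fin_cases j <;> rfl]
  interval_cases (u 0) <;> interval_cases (u 1) <;> simp_all

lemma eq_of_weylForm_self_eq_six {v : Fin 2 → ℤ} (hv : weylForm v v = 6) :
    v = ![0, 1] ∨ v = ![0, -1] ∨ v = ![3, -1] ∨ v = ![-3, 1] ∨ v = ![3, -2] ∨ v = ![-3, 2] := by
  simp only [weylForm] at hv
  obtain ⟨hb1, hb2⟩ : -2 ≤ v 1 ∧ v 1 ≤ 2 := by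
    constructor <;> nlinarith [sq_nonneg (2 * v 0 + 3 * v 1)]
  obtain ⟨ha1, ha2⟩ : -3 ≤ v 0 ∧ v 0 ≤ 3 := by
    constructor <;> nlinarith [sq_nonneg (3 * v 0 + 6 * v 1)]
  rw [show v = ![v 0, v 1] by ext j; fin_cases j <;> rfl]
  interval_cases (v 0) <;> interval_cases (v 1) <;> simp_all

def IsOrthoRootCombination (x : ℝ) (μ : Fin 2 → ℝ) : Prop :=
  ∃ u v : Fin 2 → ℤ, weylForm u u = 2 ∧ weylForm v v = 6 ∧ weylForm u v = 0 ∧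
    μ = (1 / 2 : ℝ) • (Int.cast ∘ u) + x • (Int.cast ∘ v)

lemma IsOrthoRootCombination.reflect {x : ℝ} {μ : Fin 2 → ℝ} (h : IsOrthoRootCombination x μ)
    (i : Fin 2) : IsOrthoRootCombination x (reflect i μ) := by
  obtain ⟨u, v, hu, hv, huv, rfl⟩ := h
  refine ⟨G2.reflect i u, G2.reflect i v, ?_, ?_, ?_, ?_⟩
  · rwa [weylForm_reflect]
  · rwa [weylForm_reflect]
  · rwa [weylForm_reflect]
  · rw [reflect_add_smul]
    congr 2 <;> exact (map_comp_reflect (Int.castRingHom ℝ) i _).symm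

lemma isOrthoRootCombination_reflect_iff {x : ℝ} {μ : Fin 2 → ℝ} (i : Fin 2) :
    IsOrthoRootCombination x (reflect i μ) ↔ IsOrthoRootCombination x μ :=
  ⟨fun h => reflect_reflect i μ ▸ h.reflect i, fun h => h.reflect i⟩

lemma IsOrthoRootCombination.one_lt_iff {x : ℝ} (hx : 0 ≤ x) {μ : Fin 2 → ℝ}
    (h : IsOrthoRootCombination x μ) (hdom : ∀ j, 0 ≤ μ j) :
    (∃ j, 1 < μ j) ↔ 3 / 2 < x := by
  obtain ⟨u, v, hu, hv, huv, rfl⟩ := h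
  have h0 := hdom 0
  have h1 := hdom 1
  rw [Fin.exists_fin_two]
  rcases eq_of_weylForm_self_eq_two hu with rfl | rfl | rfl | rfl | rfl | rfl <;>
  rcases eq_of_weylForm_self_eq_six hv with rfl | rfl | rfl | rfl | rfl | rfl <;>
  simp [weylForm] at huv h0 h1 ⊢ <;>
  constructor <;> intro h <;> (try rcases h with h | h) <;> linarith

end G2

open G2 in
/-- G2 in fundamental-weight coordinates: β₁ = (2,-1), β₂ = (-3,2), the simple
reflection sᵢ acts by μ ↦ μ - μᵢ βᵢ. For x ≥ 0 and λ(x) = (1/2 - 3x, 2x), any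
dominant element of the Weyl orbit of λ(x) has some coordinate > 1 iff x > 3/2. -/
theorem stmt_15 (x : ℝ) (hx : 0 ≤ x)
    (β : Fin 2 → Fin 2 → ℝ) (hβ : β = ![![2,-1], ![-3,2]])
    (refl : Fin 2 → (Fin 2 → ℝ) → (Fin 2 → ℝ))
    (hrefl : ∀ (i : Fin 2) (μ : Fin 2 → ℝ) (j : Fin 2),
      refl i μ j = μ j - μ i * β i j)
    (lam : Fin 2 → ℝ) (hlam : lam = ![1/2 - 3*x, 2*x])
    (μ : Fin 2 → ℝ)
    (horb : Relation.EqvGen (fun a b => ∃ i, b = refl i a) lam μ)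
    (hdom : ∀ j, 0 ≤ μ j) :
    (∃ j, 1 < μ j) ↔ 3/2 < x := by
  obtain rfl : refl = reflect := by
    subst hβ
    funext i ν j
    exact hrefl i ν j
  have hlam_comb : IsOrthoRootCombination x lam := by
    refine ⟨![1, 0], ![-3, 2], by decide, by decide, by decide, ?_⟩
    subst hlam
    ext j
    fin_cases j <;> simp <;> ring
  have hμ_comb : IsOrthoRootCombination x μ := by
    refine (Relation.EqvGen.iff_of_forall ?_ horb).mp hlam_comb
    rintro a _ ⟨i, rfl⟩
    exact (isOrthoRootCombination_reflect_iff i).symm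
  exact hμ_comb.one_lt_iff hx hdom
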